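/- arXiv:2411.05916 — 5 statements merged into one kernel-verified Lean document; each statement's English description precedes it below -/
import Mathlib

section
/- For all i ≠ j in {0,…,n} and all nonzero t, u ∈ F, the type-A diagonal relation holds: h_{i,j}(t) · h_{i,j}(u) = h_{i,j}(t·u). -/
open Matrix

/-- `Ea F n p q` : the (n+1)×(n+1) matrix over `F` with a 1 in entry (p,q) and 0 elsewhere. -/
def Ea (F : Type*) [Field F] (n : ℕ) (p q : Fin (n + 1)) :
    Matrix (Fin (n + 1)) (Fin (n + 1)) F :=
  Matrix.single p q 1

/-- Type-A root matrix `M_{i,j}(t) = I + t • E_{i,j}`. -/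
def Ma (F : Type*) [Field F] (n : ℕ) (i j : Fin (n + 1)) (t : F) :
    Matrix (Fin (n + 1)) (Fin (n + 1)) F :=
  1 + t • Ea F n i j

/-- `g_{i,j}(t) := M_{i,j}(t) · M_{j,i}(−t⁻¹) · M_{i,j}(t)`. -/
def gA (F : Type*) [Field F] (n : ℕ) (i j : Fin (n + 1)) (t : F) :
    Matrix (Fin (n + 1)) (Fin (n + 1)) F :=
  Ma F n i j t * Ma F n j i (-t⁻¹) * Ma F n i j t

/-- `h_{i,j}(t) := g_{i,j}(t) · g_{i,j}(−1)`. -/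
def hA (F : Type*) [Field F] (n : ℕ) (i j : Fin (n + 1)) (t : F) :
    Matrix (Fin (n + 1)) (Fin (n + 1)) F :=
  gA F n i j t * gA F n i j (-1)

/-!
Every matrix involved is the identity outside the coordinate plane spanned by `e_i` and `e_j`,
and for `i ≠ j` placing a `2 × 2` matrix on that plane is multiplicative. The relation thus
reduces to `SL₂`: there `g(t) = !![0, t; -t⁻¹, 0]`, hence `h(t) = diag(t, t⁻¹)`, which is
multiplicative in `t`.
-/

namespace Matrix

variable {ι R : Type*} [Fintype ι] [DecidableEq ι] [CommRing R]

def planeEmbed (i j : ι) (A : Matrix (Fin 2) (Fin 2) R) : Matrix ι ι R :=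
  1 + (A 0 0 - 1) • single i i 1 + A 0 1 • single i j 1 + A 1 0 • single j i 1 +
    (A 1 1 - 1) • single j j 1

theorem planeEmbed_mul {i j : ι} (hij : i ≠ j) (A B : Matrix (Fin 2) (Fin 2) R) :
    planeEmbed i j A * planeEmbed i j B = planeEmbed i j (A * B) := by
  simp only [planeEmbed, mul_add, add_mul, one_mul, mul_one, smul_mul_assoc, mul_smul_comm,
    single_mul_single_same, single_mul_single_of_ne _ _ _ _ hij,
    single_mul_single_of_ne _ _ _ _ hij.symm, smul_zero, add_zero, mul_apply, Fin.sum_univ_two]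
  module

end Matrix

section

variable {F : Type*} [Field F] {n : ℕ} (i j : Fin (n + 1))

theorem Ma_eq_planeEmbed (t : F) : Ma F n i j t = planeEmbed i j !![1, t; 0, 1] := by
  simp [Ma, Ea, planeEmbed]

theorem Ma_swap_eq_planeEmbed (t : F) : Ma F n j i t = planeEmbed i j !![1, 0; t, 1] := by
  simp [Ma, Ea, planeEmbed]

variable {i j}

theorem gA_eq_planeEmbed (hij : i ≠ j) {t : F} (ht : t ≠ 0) :
    gA F n i j t = planeEmbed i j !![0, t; -t⁻¹, 0] := by
  simp only [gA, Ma_eq_planeEmbed i j, Ma_swap_eq_planeEmbed i j, planeEmbed_mul hij, mul_fin_two]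
  congr 1
  norm_num [ht]

theorem hA_eq_planeEmbed (hij : i ≠ j) {t : F} (ht : t ≠ 0) :
    hA F n i j t = planeEmbed i j !![t, 0; 0, t⁻¹] := by
  rw [hA, gA_eq_planeEmbed hij ht, gA_eq_planeEmbed hij (neg_ne_zero.mpr one_ne_zero),
    planeEmbed_mul hij, mul_fin_two]
  norm_num

end

theorem typeA_diagonal_relation_general (F : Type*) [Field F] (n : ℕ)
    (i j : Fin (n + 1)) (hij : i ≠ j) (t u : F) (ht : t ≠ 0) (hu : u ≠ 0) :
    hA F n i j t * hA F n i j u = hA F n i j (t * u) := by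
  rw [hA_eq_planeEmbed hij ht, hA_eq_planeEmbed hij hu, hA_eq_planeEmbed hij (mul_ne_zero ht hu),
    planeEmbed_mul hij, mul_fin_two]
  simp [mul_comm]

/-- The type-A diagonal relation: for `i ≠ j` and nonzero `t, u`,
`h_{i,j}(t) · h_{i,j}(u) = h_{i,j}(t·u)`. -/
theorem typeA_diagonal_relation (F : Type*) [Field F] (n : ℕ) (hn : 1 ≤ n)
    (i j : Fin (n + 1)) (hij : i ≠ j) (t u : F) (ht : t ≠ 0) (hu : u ≠ 0) :
    hA F n i j t * hA F n i j u = hA F n i j (t * u) :=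
  typeA_diagonal_relation_general F n i j hij t u ht hu
end

section
/- Commutator of two short-root matrices: for all i ≠ j with 1 ≤ i, j ≤ n, all signs a, b ∈ {+1,−1}, and all t, u ∈ F, one has S^a_i(t) · S^b_j(u) · S^a_i(−t) · S^b_j(−u) = I − 2abtu·E_{ai,−bj} + 2abtu·E_{bj,−ai}; that is, the group commutator of S^a_i(t) and S^b_j(u) equals the long-root matrix L^{a,b}_{i,j}(−2btu). -/
open Matrix

/-- Index set `{-n, …, n}` for (2n+1)×(2n+1) matrices. -/
abbrev BIdx (n : ℕ) : Type := {z : ℤ // z ∈ Finset.Icc (-(n : ℤ)) (n : ℤ)}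

/-- `Eb F n p q` : the matrix with a 1 in entry (p,q) and 0 elsewhere
(rows and columns indexed by `{-n, …, n}`). -/
def Eb (F : Type*) [Field F] (n : ℕ) (p q : ℤ) : Matrix (BIdx n) (BIdx n) F :=
  Matrix.of fun r c => if ((r : ℤ) = p ∧ (c : ℤ) = q) then 1 else 0

/-- Short-root matrix `S^a_i(t) := I + 2at·E_{ai,0} − at·E_{0,−ai} − t²·E_{ai,−ai}`. -/
def Sb (F : Type*) [Field F] (n : ℕ) (a i : ℤ) (t : F) : Matrix (BIdx n) (BIdx n) F :=
  1 + (2 * (a : F) * t) • Eb F n (a * i) 0 - ((a : F) * t) • Eb F n 0 (-(a * i))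
    - t ^ 2 • Eb F n (a * i) (-(a * i))

/-- Long-root matrix `L^{a,b}_{i,j}(t) := I + at·E_{ai,−bj} − at·E_{bj,−ai}`. -/
def Lb (F : Type*) [Field F] (n : ℕ) (a b i j : ℤ) (t : F) : Matrix (BIdx n) (BIdx n) F :=
  1 + ((a : F) * t) • Eb F n (a * i) (-(b * j)) - ((a : F) * t) • Eb F n (b * j) (-(a * i))


lemma Eb_mul_Eb (F : Type*) [Field F] (n : ℕ) (p q r s : ℤ)
    (hq : q ∈ Finset.Icc (-(n:ℤ)) (n:ℤ)) :
    Eb F n p q * Eb F n r s = if q = r then Eb F n p s else 0 := by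
  ext x y
  simp only [Matrix.mul_apply, Eb, Matrix.of_apply]
  rw [Finset.sum_eq_single (⟨q, hq⟩ : BIdx n)]
  · by_cases h1 : (x:ℤ) = p <;> by_cases h2 : q = r <;> by_cases h3 : (y:ℤ) = s <;>
      simp [h1, h2, h3]
  · intro k _ hk
    have : (k:ℤ) ≠ q := fun h => hk (Subtype.ext h)
    simp [this]
  · intro h; exact absurd (Finset.mem_univ _) h

/-- Commutator of two short-root matrices: for `i ≠ j`,
`S^a_i(t) · S^b_j(u) · S^a_i(−t) · S^b_j(−u) = I − 2abtu·E_{ai,−bj} + 2abtu·E_{bj,−ai}`;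
that is, the group commutator of `S^a_i(t)` and `S^b_j(u)` equals the long-root matrix
`L^{a,b}_{i,j}(−2btu)`. -/
theorem typeB_short_short_commutator (F : Type*) [Field F] (n : ℕ) (hn : 1 ≤ n)
    (a b : ℤ) (ha : a = 1 ∨ a = -1) (hb : b = 1 ∨ b = -1)
    (i j : ℤ) (hi1 : 1 ≤ i) (hin : i ≤ (n : ℤ)) (hj1 : 1 ≤ j) (hjn : j ≤ (n : ℤ))
    (hij : i ≠ j) (t u : F) :
    Sb F n a i t * Sb F n b j u * Sb F n a i (-t) * Sb F n b j (-u)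
        = 1 - (2 * (a : F) * (b : F) * t * u) • Eb F n (a * i) (-(b * j))
            + (2 * (a : F) * (b : F) * t * u) • Eb F n (b * j) (-(a * i)) ∧
    Sb F n a i t * Sb F n b j u * Sb F n a i (-t) * Sb F n b j (-u)
        = Lb F n a b i j (-(2 * (b : F) * t * u)) := by
  have h0 : (0:ℤ) ∈ Finset.Icc (-(n:ℤ)) (n:ℤ) := by simp
  have hma : -(a*i) ∈ Finset.Icc (-(n:ℤ)) (n:ℤ) := by
    rcases ha with rfl | rfl <;> simp <;> omega
  have hmb : -(b*j) ∈ Finset.Icc (-(n:ℤ)) (n:ℤ) := by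
    rcases hb with rfl | rfl <;> simp <;> omega
  have e00 : ∀ p s : ℤ, Eb F n p 0 * Eb F n 0 s = Eb F n p s := fun p s => by
    rw [Eb_mul_Eb F n p 0 0 s h0, if_pos rfl]
  have e0a : ∀ p s : ℤ, Eb F n p 0 * Eb F n (a*i) s = 0 := fun p s => by
    rw [Eb_mul_Eb F n p 0 (a*i) s h0, if_neg (by rcases ha with rfl | rfl <;> omega)]
  have e0b : ∀ p s : ℤ, Eb F n p 0 * Eb F n (b*j) s = 0 := fun p s => by
    rw [Eb_mul_Eb F n p 0 (b*j) s h0, if_neg (by rcases hb with rfl | rfl <;> omega)]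
  have ea0 : ∀ p s : ℤ, Eb F n p (-(a*i)) * Eb F n 0 s = 0 := fun p s => by
    rw [Eb_mul_Eb F n p _ 0 s hma, if_neg (by rcases ha with rfl | rfl <;> omega)]
  have eaa : ∀ p s : ℤ, Eb F n p (-(a*i)) * Eb F n (a*i) s = 0 := fun p s => by
    rw [Eb_mul_Eb F n p _ (a*i) s hma, if_neg (by rcases ha with rfl | rfl <;> omega)]
  have eab : ∀ p s : ℤ, Eb F n p (-(a*i)) * Eb F n (b*j) s = 0 := fun p s => by
    rw [Eb_mul_Eb F n p _ (b*j) s hma,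
      if_neg (by rcases ha with rfl | rfl <;> rcases hb with rfl | rfl <;> omega)]
  have eb0 : ∀ p s : ℤ, Eb F n p (-(b*j)) * Eb F n 0 s = 0 := fun p s => by
    rw [Eb_mul_Eb F n p _ 0 s hmb, if_neg (by rcases hb with rfl | rfl <;> omega)]
  have eba : ∀ p s : ℤ, Eb F n p (-(b*j)) * Eb F n (a*i) s = 0 := fun p s => by
    rw [Eb_mul_Eb F n p _ (a*i) s hmb,
      if_neg (by rcases ha with rfl | rfl <;> rcases hb with rfl | rfl <;> omega)]
  have ebb : ∀ p s : ℤ, Eb F n p (-(b*j)) * Eb F n (b*j) s = 0 := fun p s => by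
    rw [Eb_mul_Eb F n p _ (b*j) s hmb, if_neg (by rcases hb with rfl | rfl <;> omega)]
  have key : Sb F n a i t * Sb F n b j u * Sb F n a i (-t) * Sb F n b j (-u)
      = 1 - (2 * (a : F) * (b : F) * t * u) • Eb F n (a * i) (-(b * j))
          + (2 * (a : F) * (b : F) * t * u) • Eb F n (b * j) (-(a * i)) := by
    simp only [Sb, mul_add, add_mul, mul_sub, sub_mul, one_mul, mul_one,
      Matrix.smul_mul, Matrix.mul_smul, smul_smul,
      e00, e0a, e0b, ea0, eaa, eab, eb0, eba, ebb,
      smul_zero, mul_zero, zero_mul, add_zero, zero_add, sub_zero, zero_sub]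
    rcases ha with rfl | rfl <;> rcases hb with rfl | rfl <;>
      push_cast <;> module
  refine ⟨key, ?_⟩
  rw [key, Lb]
  rcases ha with rfl | rfl <;> rcases hb with rfl | rfl <;> push_cast <;> module
end

section
/- Commuting long-root matrices: let 1 ≤ i, j, k, ℓ ≤ n with i ≠ j and k ≠ ℓ, and let a, b, c, d ∈ {+1,−1} be signs such that the sets of signed indices {ai, bj} and {−ck, −dℓ} are disjoint. Then for all t, u ∈ F, one has L^{a,b}_{i,j}(t) · L^{c,d}_{k,ℓ}(u) · L^{a,b}_{i,j}(−t) · L^{c,d}_{k,ℓ}(−u) = I; equivalently, the long-root matrices L^{a,b}_{i,j}(t) and L^{c,d}_{k,ℓ}(u) commute. -/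
open Matrix

lemma Eb_mul_zero (F : Type*) [Field F] (n : ℕ) (p q r s : ℤ) (h : q ≠ r) :
    Eb F n p q * Eb F n r s = 0 := by
  ext x y
  simp only [Matrix.mul_apply, Eb, Matrix.of_apply, Matrix.zero_apply]
  apply Finset.sum_eq_zero
  intro m _
  by_cases h1 : (x:ℤ) = p ∧ (m:ℤ) = q
  · by_cases h2 : (m:ℤ) = r ∧ (y:ℤ) = s
    · exact absurd (h1.2.symm.trans h2.1) h
    · simp [h2]
  · simp [h1]

lemma Lb_mul_add (F : Type*) [Field F] (n : ℕ) (a b i j : ℤ)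
    (h0i : a * i ≠ 0) (h0j : b * j ≠ 0) (h1 : a * i ≠ -(b * j)) (t t' : F) :
    Lb F n a b i j t * Lb F n a b i j t' = Lb F n a b i j (t + t') := by
  have hAA := Eb_mul_zero F n (a*i) (-(b*j)) (a*i) (-(b*j)) (by omega)
  have hAB := Eb_mul_zero F n (a*i) (-(b*j)) (b*j) (-(a*i)) (by omega)
  have hBA := Eb_mul_zero F n (b*j) (-(a*i)) (a*i) (-(b*j)) (by omega)
  have hBB := Eb_mul_zero F n (b*j) (-(a*i)) (b*j) (-(a*i)) (by omega)
  simp only [Lb, mul_add, add_mul, sub_mul, mul_sub, Matrix.smul_mul, Matrix.mul_smul,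
    hAA, hAB, hBA, hBB, smul_zero, one_mul, mul_one]
  module

lemma Lb_comm (F : Type*) [Field F] (n : ℕ) (a b c d i j k l : ℤ)
    (h1 : a * i ≠ -(c * k)) (h2 : a * i ≠ -(d * l))
    (h3 : b * j ≠ -(c * k)) (h4 : b * j ≠ -(d * l)) (t u : F) :
    Lb F n a b i j t * Lb F n c d k l u = Lb F n c d k l u * Lb F n a b i j t := by
  have hAC := Eb_mul_zero F n (a*i) (-(b*j)) (c*k) (-(d*l)) (by omega)
  have hAD := Eb_mul_zero F n (a*i) (-(b*j)) (d*l) (-(c*k)) (by omega)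
  have hBC := Eb_mul_zero F n (b*j) (-(a*i)) (c*k) (-(d*l)) (by omega)
  have hBD := Eb_mul_zero F n (b*j) (-(a*i)) (d*l) (-(c*k)) (by omega)
  have hCA := Eb_mul_zero F n (c*k) (-(d*l)) (a*i) (-(b*j)) (by omega)
  have hCB := Eb_mul_zero F n (c*k) (-(d*l)) (b*j) (-(a*i)) (by omega)
  have hDA := Eb_mul_zero F n (d*l) (-(c*k)) (a*i) (-(b*j)) (by omega)
  have hDB := Eb_mul_zero F n (d*l) (-(c*k)) (b*j) (-(a*i)) (by omega)
  simp only [Lb, mul_add, add_mul, sub_mul, mul_sub, Matrix.smul_mul, Matrix.mul_smul,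
    hAC, hAD, hBC, hBD, hCA, hCB, hDA, hDB, smul_zero, one_mul, mul_one]
  module

lemma Lb_zero (F : Type*) [Field F] (n : ℕ) (a b i j : ℤ) :
    Lb F n a b i j 0 = 1 := by
  simp [Lb]

/-- Commuting long-root matrices: if the sets of signed indices `{ai, bj}` and
`{−ck, −dℓ}` are disjoint, then
`L^{a,b}_{i,j}(t) · L^{c,d}_{k,ℓ}(u) · L^{a,b}_{i,j}(−t) · L^{c,d}_{k,ℓ}(−u) = I`;
equivalently, `L^{a,b}_{i,j}(t)` and `L^{c,d}_{k,ℓ}(u)` commute. -/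
theorem typeB_long_long_commute (F : Type*) [Field F] (n : ℕ) (hn : 1 ≤ n)
    (a b c d : ℤ) (ha : a = 1 ∨ a = -1) (hb : b = 1 ∨ b = -1)
    (hc : c = 1 ∨ c = -1) (hd : d = 1 ∨ d = -1)
    (i j k l : ℤ) (hi1 : 1 ≤ i) (hin : i ≤ (n : ℤ)) (hj1 : 1 ≤ j) (hjn : j ≤ (n : ℤ))
    (hk1 : 1 ≤ k) (hkn : k ≤ (n : ℤ)) (hl1 : 1 ≤ l) (hln : l ≤ (n : ℤ))
    (hij : i ≠ j) (hkl : k ≠ l)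
    (hdisj : ({a * i, b * j} : Set ℤ) ∩ ({-(c * k), -(d * l)} : Set ℤ) = ∅)
    (t u : F) :
    Lb F n a b i j t * Lb F n c d k l u * Lb F n a b i j (-t) * Lb F n c d k l (-u) = 1 ∧
    Lb F n a b i j t * Lb F n c d k l u = Lb F n c d k l u * Lb F n a b i j t := by
  have hne : ∀ z ∈ ({a * i, b * j} : Set ℤ), z ∉ ({-(c * k), -(d * l)} : Set ℤ) := by
    intro z hz hz'
    have : z ∈ ({a * i, b * j} : Set ℤ) ∩ ({-(c * k), -(d * l)} : Set ℤ) := ⟨hz, hz'⟩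
    rw [hdisj] at this
    exact this
  have h1 : a * i ≠ -(c * k) := by intro h; exact hne (a*i) (by simp) (by simp [h])
  have h2 : a * i ≠ -(d * l) := by intro h; exact hne (a*i) (by simp) (by simp [h])
  have h3 : b * j ≠ -(c * k) := by intro h; exact hne (b*j) (by simp) (by simp [h])
  have h4 : b * j ≠ -(d * l) := by intro h; exact hne (b*j) (by simp) (by simp [h])
  have h0a : a * i ≠ 0 := by rcases ha with rfl | rfl <;> omega
  have h0b : b * j ≠ 0 := by rcases hb with rfl | rfl <;> omega
  have h0c : c * k ≠ 0 := by rcases hc with rfl | rfl <;> omega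
  have h0d : d * l ≠ 0 := by rcases hd with rfl | rfl <;> omega
  have hab : a * i ≠ -(b * j) := by
    rcases ha with rfl | rfl <;> rcases hb with rfl | rfl <;> omega
  have hcd : c * k ≠ -(d * l) := by
    rcases hc with rfl | rfl <;> rcases hd with rfl | rfl <;> omega
  have hcomm := Lb_comm F n a b c d i j k l h1 h2 h3 h4 t u
  refine ⟨?_, hcomm⟩
  calc Lb F n a b i j t * Lb F n c d k l u * Lb F n a b i j (-t) * Lb F n c d k l (-u)
      = Lb F n c d k l u * (Lb F n a b i j t * Lb F n a b i j (-t)) * Lb F n c d k l (-u) := by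
        rw [hcomm, Matrix.mul_assoc (Lb F n c d k l u) (Lb F n a b i j t) (Lb F n a b i j (-t))]
    _ = Lb F n c d k l u * Lb F n c d k l (-u) := by
        rw [Lb_mul_add F n a b i j h0a h0b hab, add_neg_cancel, Lb_zero, mul_one]
    _ = 1 := by
        rw [Lb_mul_add F n c d k l h0c h0d hcd, add_neg_cancel, Lb_zero]
end

section
/- Commuting long- and short-root matrices: let 1 ≤ i, j, k ≤ n and signs a, b, c ∈ {+1,−1} satisfy i ≠ j, −ck ≠ ai, and −ck ≠ bj. Then for all t, u ∈ F, one has L^{a,b}_{i,j}(t) · S^c_k(u) · L^{a,b}_{i,j}(−t) · S^c_k(−u) = I; equivalently, L^{a,b}_{i,j}(t) and S^c_k(u) commute. -/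
open Matrix

/-!
Write `L^{a,b}_{i,j}(t) = 1 + X` and `S^c_k(u) = 1 + Y` as sums of matrix units. The index
conditions ensure that no column index of a unit in `X` is a row index of a unit in `Y`
and vice versa, so `XY = YX = 0` and the two matrices commute. The remaining identities
`L(t) L(-t) = 1` and `S(u) S(-u) = 1` are the one-parameter subgroup property; for `S` the
cross term `E_{ck,0} E_{0,-ck} = E_{ck,-ck}` cancels the quadratic terms because `c² = 1`.
-/

section RootMatrices

variable {F : Type*} [Field F] {n : ℕ}

theorem Eb_mul_Eb_of_ne {p q r s : ℤ} (h : q ≠ r) : Eb F n p q * Eb F n r s = 0 := by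
  ext x y
  simp only [Eb, mul_apply, of_apply, Matrix.zero_apply]
  refine Finset.sum_eq_zero fun z _ => ?_
  split_ifs <;> simp_all

theorem Eb_mul_Eb_zero (p s : ℤ) : Eb F n p 0 * Eb F n 0 s = Eb F n p s := by
  ext x y
  simp only [Eb, mul_apply, of_apply]
  rw [Finset.sum_eq_single ⟨0, by simp⟩
    (fun z _ hz => by simp [Subtype.ext_iff] at hz; simp [hz]) (by simp)]
  split_ifs <;> simp_all

theorem Lb_mul_Lb_neg {a b i j : ℤ} (hp : a * i ≠ 0) (hq : b * j ≠ 0) (hpq : a * i + b * j ≠ 0)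
    (t : F) : Lb F n a b i j t * Lb F n a b i j (-t) = 1 := by
  simp (disch := omega) only [Lb, mul_add, add_mul, mul_sub, sub_mul, smul_mul_assoc,
    mul_smul_comm, one_mul, mul_one, Eb_mul_Eb_of_ne, smul_zero, sub_zero]
  module

theorem Sb_mul_Sb_neg {c k : ℤ} (hc : c = 1 ∨ c = -1) (hk : k ≠ 0) (u : F) :
    Sb F n c k u * Sb F n c k (-u) = 1 := by
  have hck : c * k ≠ 0 := by rcases hc with rfl | rfl <;> omega
  simp (disch := omega) only [Sb, mul_add, add_mul, mul_sub, sub_mul, smul_mul_assoc,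
    mul_smul_comm, one_mul, mul_one, Eb_mul_Eb_zero, Eb_mul_Eb_of_ne, smul_zero, sub_zero,
    add_zero]
  obtain rfl | rfl := hc <;> push_cast <;> module

theorem commute_one_add_of_mul_eq_zero {R : Type*} [Ring R] {x y : R} (hxy : x * y = 0)
    (hyx : y * x = 0) : Commute (1 + x) (1 + y) := by
  simp [Commute, SemiconjBy, add_mul, mul_add, hxy, hyx, add_comm, add_left_comm]

theorem Lb_commute_Sb {a b i j c k : ℤ} (hp : a * i ≠ 0) (hq : b * j ≠ 0)
    (hpr : c * k + a * i ≠ 0) (hqr : c * k + b * j ≠ 0) (t u : F) :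
    Commute (Lb F n a b i j t) (Sb F n c k u) := by
  rw [Lb, Sb, add_sub_assoc, add_sub_assoc, add_sub_assoc]
  apply commute_one_add_of_mul_eq_zero <;>
    simp (disch := omega) only [mul_sub, sub_mul, smul_mul_assoc, mul_smul_comm,
      Eb_mul_Eb_of_ne, smul_zero, sub_zero]

end RootMatrices

theorem typeB_long_short_commute_general (F : Type*) [Field F] (n : ℕ)
    (a b c : ℤ) (ha : a = 1 ∨ a = -1) (hb : b = 1 ∨ b = -1) (hc : c = 1 ∨ c = -1)
    (i j k : ℤ) (hi1 : 1 ≤ i) (hj1 : 1 ≤ j) (hk1 : 1 ≤ k)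
    (hij : i ≠ j) (hka : -(c * k) ≠ a * i) (hkb : -(c * k) ≠ b * j)
    (t u : F) :
    Lb F n a b i j t * Sb F n c k u * Lb F n a b i j (-t) * Sb F n c k (-u) = 1 ∧
    Lb F n a b i j t * Sb F n c k u = Sb F n c k u * Lb F n a b i j t := by
  have hp : a * i ≠ 0 := by rcases ha with rfl | rfl <;> omega
  have hq : b * j ≠ 0 := by rcases hb with rfl | rfl <;> omega
  have hpq : a * i + b * j ≠ 0 := by
    rcases ha with rfl | rfl <;> rcases hb with rfl | rfl <;> omega
  have hLS : Commute (Lb F n a b i j t) (Sb F n c k u) :=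
    Lb_commute_Sb hp hq (by omega) (by omega) t u
  refine ⟨?_, hLS.eq⟩
  rw [hLS.eq, mul_assoc (Sb F n c k u), Lb_mul_Lb_neg hp hq hpq, mul_one,
    Sb_mul_Sb_neg hc (by omega)]

/-- Commuting long- and short-root matrices: for `i ≠ j`, `−ck ≠ ai`, `−ck ≠ bj`,
`L^{a,b}_{i,j}(t) · S^c_k(u) · L^{a,b}_{i,j}(−t) · S^c_k(−u) = I`;
equivalently, `L^{a,b}_{i,j}(t)` and `S^c_k(u)` commute. -/
theorem typeB_long_short_commute (F : Type*) [Field F] (n : ℕ) (hn : 1 ≤ n)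
    (a b c : ℤ) (ha : a = 1 ∨ a = -1) (hb : b = 1 ∨ b = -1) (hc : c = 1 ∨ c = -1)
    (i j k : ℤ) (hi1 : 1 ≤ i) (hin : i ≤ (n : ℤ)) (hj1 : 1 ≤ j) (hjn : j ≤ (n : ℤ))
    (hk1 : 1 ≤ k) (hkn : k ≤ (n : ℤ))
    (hij : i ≠ j) (hka : -(c * k) ≠ a * i) (hkb : -(c * k) ≠ b * j)
    (t u : F) :
    Lb F n a b i j t * Sb F n c k u * Lb F n a b i j (-t) * Sb F n c k (-u) = 1 ∧
    Lb F n a b i j t * Sb F n c k u = Sb F n c k u * Lb F n a b i j t :=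
  typeB_long_short_commute_general F n a b c ha hb hc i j k hi1 hj1 hk1 hij hka hkb t u
end

section
/- Suppose V has at least two elements and the directed graph (V,E) is weakly connected. Suppose further that to every vertex x ∈ V there is an associated function f_x : R × R → S such that for every directed edge (x,y) ∈ E and all t, u, v ∈ R one has f_x(t·u, v) = f_y(t, u·v). Then there exists a function g : R → S such that f_x(t, u) = g(t·u) for every x ∈ V and all t, u ∈ R. -/
/-- Let `R` be a ring, `S` a finite set, and `(V, E)` a weakly connected directed graph
with at least two vertices (weak connectivity: the equivalence relation generated by `E`
relates every pair of vertices). Suppose that to every vertex `x` there is an associated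
function `f x : R × R → S` such that for every directed edge `(x, y)` and all
`t, u, v ∈ R` one has `f x (t·u) v = f y t (u·v)`. Then there is a function `g : R → S`
with `f x t u = g (t·u)` for every vertex `x` and all `t, u ∈ R`. -/
theorem graph_functions_collapse {R S V : Type*} [Ring R] [Finite S]
    [Nontrivial V] (E : V → V → Prop)
    (hconn : ∀ x y : V, Relation.EqvGen E x y)
    (f : V → R → R → S)
    (hedge : ∀ x y : V, E x y → ∀ t u v : R, f x (t * u) v = f y t (u * v)) :
    ∃ g : R → S, ∀ (x : V) (t u : R), f x t u = g (t * u) := by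
  -- along an edge, f x = f y
  have heq : ∀ x y : V, E x y → f x = f y := by
    intro x y h
    funext t u
    have := hedge x y h t 1 u
    simpa using this
  -- all f equal
  have hall : ∀ x y : V, f x = f y := by
    intro x y
    induction hconn x y with
    | rel a b h => exact heq a b h
    | refl a => rfl
    | symm a b _ ih => exact ih.symm
    | trans a b c _ _ ih1 ih2 => exact ih1.trans ih2
  -- there is some edge
  have key : ∀ x y : V, Relation.EqvGen E x y → x = y ∨ ∃ a b : V, E a b := by
    intro x y h
    induction h with
    | rel a b h => exact Or.inr ⟨a, b, h⟩
    | refl a => exact Or.inl rfl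
    | symm a b _ ih => exact ih.imp Eq.symm id
    | trans a b c _ _ ih1 ih2 =>
      rcases ih1 with h1 | h1
      · exact ih2.imp (h1.trans) id
      · exact Or.inr h1
  obtain ⟨x0, y0, hxy⟩ := exists_pair_ne V
  obtain ⟨a, b, hab⟩ := (key x0 y0 (hconn x0 y0)).resolve_left hxy
  refine ⟨fun s => f a s 1, fun x t u => ?_⟩
  rw [hall x a]
  have := hedge a b hab t u 1
  rw [mul_one] at this
  show f a t u = f a (t * u) 1
  rw [this]
  exact congrFun (congrFun (hall a b) t) u
end
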